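/- Let 𝔪 = (Δ₁, …, Δ_N) be a ladder multisegment: all Δ_i = [c_i, d_i] are integer segments with c_1 > c_2 > ⋯ > c_N and d_1 > d_2 > ⋯ > d_N. Let 𝔫 = (Δ'₁, …, Δ'_{N'}) be an arbitrary finite list of segments. Define X = {(i,j) : Δ_i ≺ Δ'_j} and Y = {(i,j) : (Δ_i − 1) ≺ Δ'_j}, and the relation (i₂,j₂) ↝ (i₁,j₁) iff either (i₁ = i₂ and Δ'_{j₂} ≺ Δ'_{j₁}) or (j₁ = j₂ and Δ_{i₁} ≺ Δ_{i₂}). Define the restricted relation ↝' by (i₂,j₂) ↝' (i₁,j₁) iff (i₂,j₂) ↝ (i₁,j₁) and i₁ ≤ i₂ + 1. Then there exists a ↝-matching function from X to Y if and only if there exists a ↝'-matching function from X to Y. -/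

import Mathlib

/-- A segment `[a, b]` of integers (meaningful when `a ≤ b`). -/
structure Seg where
  a : ℤ
  b : ℤ
deriving DecidableEq

/-- `Δ` is a genuine segment, i.e. `a ≤ b`. -/
def Seg.IsSeg (Δ : Seg) : Prop := Δ.a ≤ Δ.b

/-- Containment of segments `Δ ⊆ Δ'`. -/
def Seg.Sub (Δ Δ' : Seg) : Prop := Δ'.a ≤ Δ.a ∧ Δ.b ≤ Δ'.b

/-- `Δ` and `Δ'` are linked: their union is again a segment (interval) but neither is
contained in the other. -/
def Seg.Linked (Δ Δ' : Seg) : Prop :=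
  max Δ.a Δ'.a ≤ min Δ.b Δ'.b + 1 ∧ ¬ Δ.Sub Δ' ∧ ¬ Δ'.Sub Δ

/-- `Δ` precedes `Δ'` (`Δ ≺ Δ'`): they are linked and `Δ` starts strictly earlier. -/
def Seg.Prec (Δ Δ' : Seg) : Prop := Δ.Linked Δ' ∧ Δ.a < Δ'.a

/-- The shifted segment `Δ - 1 = [a-1, b-1]`. -/
def Seg.shift (Δ : Seg) : Seg := ⟨Δ.a - 1, Δ.b - 1⟩

/-- There exists a matching function from `X` into `Y` for the relation `R`
(read `R q p` as `q ↝ p`): an injective `f : X → Y` with `f p ↝ p` for all `p ∈ X`. -/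
def ExistsMatching {ι : Type*} (X Y : Set ι) (R : ι → ι → Prop) : Prop :=
  ∃ f : X → Y, Function.Injective f ∧ ∀ p : X, R (f p : ι) (p : ι)

/- ---------------------------------------------------------------------------
Auxiliary material for the proof.
--------------------------------------------------------------------------- -/

namespace LadderMatchAux

/-- Numerical characterization of `Prec`. -/
lemma seg_prec_iff (Δ Δ' : Seg) :
    Δ.Prec Δ' ↔ Δ.a < Δ'.a ∧ Δ.b < Δ'.b ∧ Δ'.a ≤ Δ.b + 1 := by
  unfold Seg.Prec Seg.Linked Seg.Sub
  constructor
  · rintro ⟨⟨h1, h2, h3⟩, h4⟩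
    have hb : Δ.b < Δ'.b := by
      by_contra hb
      exact h3 ⟨le_of_lt h4, not_lt.mp hb⟩
    refine ⟨h4, hb, ?_⟩
    have h5 := le_trans (le_max_right Δ.a Δ'.a) h1
    have h6 := min_le_left Δ.b Δ'.b
    omega
  · rintro ⟨h1, h2, h3⟩
    refine ⟨⟨?_, ?_, ?_⟩, h1⟩
    · rw [max_eq_right h1.le, min_eq_left h2.le]; exact h3
    · rintro ⟨h4, h5⟩; omega
    · rintro ⟨h4, h5⟩; omega

instance (Δ Δ' : Seg) : Decidable (Δ.Prec Δ') :=
  decidable_of_iff _ (seg_prec_iff Δ Δ').symm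

variable (N N' : ℤ) (m n : ℤ → Seg)

/-- The set `X` as a set. -/
abbrev Xs : Set (ℤ × ℤ) :=
  {p : ℤ × ℤ | 0 ≤ p.1 ∧ p.1 < N ∧ 0 ≤ p.2 ∧ p.2 < N' ∧ (m p.1).Prec (n p.2)}

/-- The set `Y` as a set. -/
abbrev Ys : Set (ℤ × ℤ) :=
  {p : ℤ × ℤ | 0 ≤ p.1 ∧ p.1 < N ∧ 0 ≤ p.2 ∧ p.2 < N' ∧ (m p.1).shift.Prec (n p.2)}

/-- The unrestricted relation. -/
abbrev Rb : (ℤ × ℤ) → (ℤ × ℤ) → Prop := fun q p =>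
  (p.1 = q.1 ∧ (n q.2).Prec (n p.2)) ∨ (p.2 = q.2 ∧ (m p.1).Prec (m q.1))

/-- The restricted relation. -/
abbrev Rr : (ℤ × ℤ) → (ℤ × ℤ) → Prop := fun q p =>
  ((p.1 = q.1 ∧ (n q.2).Prec (n p.2)) ∨ (p.2 = q.2 ∧ (m p.1).Prec (m q.1))) ∧ p.1 ≤ q.1 + 1

/-- `X` as a finset. -/
noncomputable def XF : Finset (ℤ × ℤ) :=
  ((Finset.Icc (0:ℤ) (N-1)) ×ˢ (Finset.Icc (0:ℤ) (N'-1))).filter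
    (fun p => (m p.1).Prec (n p.2))

/-- `Y` as a finset. -/
noncomputable def YF : Finset (ℤ × ℤ) :=
  ((Finset.Icc (0:ℤ) (N-1)) ×ˢ (Finset.Icc (0:ℤ) (N'-1))).filter
    (fun p => (m p.1).shift.Prec (n p.2))

/-- Restricted neighborhoods in `Y`. -/
noncomputable def tR (p : ℤ × ℤ) : Finset (ℤ × ℤ) :=
  (YF N N' m n).filter (fun q => Rr m n q p)

lemma mem_tR (p q : ℤ × ℤ) :
    q ∈ tR N N' m n p ↔ q ∈ YF N N' m n ∧ Rr m n q p := by
  unfold tR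
  exact Finset.mem_filter

lemma mem_XF (i j : ℤ) :
    (i, j) ∈ XF N N' m n ↔
      0 ≤ i ∧ i < N ∧ 0 ≤ j ∧ j < N' ∧
        ((m i).a < (n j).a ∧ (m i).b < (n j).b ∧ (n j).a ≤ (m i).b + 1) := by
  simp only [XF, Finset.mem_filter, Finset.mem_product, Finset.mem_Icc, seg_prec_iff]
  omega

lemma mem_YF (i j : ℤ) :
    (i, j) ∈ YF N N' m n ↔
      0 ≤ i ∧ i < N ∧ 0 ≤ j ∧ j < N' ∧
        ((m i).a ≤ (n j).a ∧ (m i).b ≤ (n j).b ∧ (n j).a ≤ (m i).b) := by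
  simp only [YF, Finset.mem_filter, Finset.mem_product, Finset.mem_Icc, seg_prec_iff, Seg.shift]
  omega

lemma mem_XF_iff_Xs (p : ℤ × ℤ) : p ∈ XF N N' m n ↔ p ∈ Xs N N' m n := by
  rw [show p = (p.1, p.2) from rfl, mem_XF]
  simp only [Xs, Set.mem_setOf_eq, seg_prec_iff]

lemma mem_YF_iff_Ys (p : ℤ × ℤ) : p ∈ YF N N' m n ↔ p ∈ Ys N N' m n := by
  rw [show p = (p.1, p.2) from rfl, mem_YF]
  simp only [Ys, Set.mem_setOf_eq, seg_prec_iff, Seg.shift]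
  omega

section Ladder

variable (hladder : ∀ i j, 0 ≤ i → i < j → j < N → (m j).a < (m i).a ∧ (m j).b < (m i).b)

include hladder

lemma mono {i i' : ℤ} (h0 : 0 ≤ i) (h1 : i ≤ i') (h2 : i' < N) :
    (m i').a ≤ (m i).a ∧ (m i').b ≤ (m i).b := by
  rcases eq_or_lt_of_le h1 with h | h
  · subst h; exact ⟨le_refl _, le_refl _⟩
  · exact ⟨(hladder i i' h0 h h2).1.le, (hladder i i' h0 h h2).2.le⟩

lemma rev_a {i i' : ℤ} (h0 : 0 ≤ i) (h2 : i < N) (h0' : 0 ≤ i') (h2' : i' < N)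
    (h : (m i').a < (m i).a) : i < i' := by
  by_contra hc
  push_neg at hc
  exact absurd ((mono N m hladder h0' hc h2).1) (not_le.mpr h)

/-- Interval lemma: between a `Y`-point and an `X`-point above it in the same column,
the next row up from the `Y`-point is in `X`. -/
lemma interval {r i j : ℤ} (hy : (r, j) ∈ YF N N' m n) (hx : (i, j) ∈ XF N N' m n)
    (hri : r < i) : (r + 1, j) ∈ XF N N' m n := by
  rw [mem_YF] at hy
  rw [mem_XF] at hx
  rw [mem_XF]
  obtain ⟨hr0, hrN, hj0, hjN, hya, hyb, hyc⟩ := hy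
  obtain ⟨hi0, hiN, -, -, hxa, hxb, hxc⟩ := hx
  have hr1N : r + 1 < N := by omega
  have hstep := hladder r (r+1) hr0 (by omega) hr1N
  have hmono := mono N m hladder (by omega : (0:ℤ) ≤ r+1) (by omega : r + 1 ≤ i) hiN
  refine ⟨by omega, hr1N, hj0, hjN, by omega, by omega, by omega⟩

/-- The basic vertical (drop-one) edge of the restricted relation. -/
lemma vert_edge {r j : ℤ} (hy : (r, j) ∈ YF N N' m n) (hx : (r + 1, j) ∈ XF N N' m n) :
    (r, j) ∈ tR N N' m n (r + 1, j) := by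
  rw [mem_tR]
  refine ⟨hy, ⟨Or.inr ⟨rfl, ?_⟩, by omega⟩⟩
  show (m (r+1)).Prec (m r)
  rw [mem_YF] at hy
  rw [mem_XF] at hx
  rw [seg_prec_iff]
  obtain ⟨hr0, hrN, -, -, hya, hyb, hyc⟩ := hy
  obtain ⟨-, hr1N, -, -, hxa, hxb, hxc⟩ := hx
  have hstep := hladder r (r+1) hr0 (by omega) hr1N
  exact ⟨hstep.1, hstep.2, by omega⟩

end Ladder


/-- The hard direction. -/
lemma hard
    (hladder : ∀ i j, 0 ≤ i → i < j → j < N → (m j).a < (m i).a ∧ (m j).b < (m i).b)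
    (h : ExistsMatching (Xs N N' m n) (Ys N N' m n) (Rb m n)) :
    ExistsMatching (Xs N N' m n) (Ys N N' m n) (Rr m n) := by
  classical
  by_contra hno
  obtain ⟨f, finj, hf⟩ := h
  -- Step 1: a Hall violator exists for the restricted relation.
  have hviol : ∃ s : Finset (Xs N N' m n),
      (s.biUnion (fun x => tR N N' m n ↑x)).card < s.card := by
    by_contra hh
    push_neg at hh
    obtain ⟨g, ginj, hg⟩ := (Finset.all_card_le_biUnion_card_iff_exists_injective
      (fun x : Xs N N' m n => tR N N' m n ↑x)).mp hh
    refine hno ⟨fun x => ⟨g x, ?_⟩, ?_, ?_⟩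
    · have hx := hg x
      rw [mem_tR] at hx
      exact (mem_YF_iff_Ys N N' m n _).mp hx.1
    · intro a b hab
      exact ginj (congrArg Subtype.val hab)
    · intro p
      have hx := hg p
      rw [mem_tR] at hx
      exact hx.2
  obtain ⟨s₀, hs₀⟩ := hviol
  set NN : Finset (ℤ × ℤ) → Finset (ℤ × ℤ) := fun S => S.biUnion (tR N N' m n) with hNN
  -- Step 2: a minimal violator.
  set cand : Finset (Finset (ℤ × ℤ)) :=
    (XF N N' m n).powerset.filter (fun S => (NN S).card < S.card) with hcand
  have hS₀c : s₀.image Subtype.val ∈ cand := by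
    rw [hcand, Finset.mem_filter, Finset.mem_powerset]
    constructor
    · intro p hp
      obtain ⟨x, hx, rfl⟩ := Finset.mem_image.mp hp
      exact (mem_XF_iff_Xs N N' m n _).mpr x.2
    · rw [Finset.card_image_of_injective _ Subtype.val_injective]
      simp only [hNN]
      rw [Finset.image_biUnion]
      exact hs₀
  obtain ⟨S, hScand, hSmin⟩ : ∃ S ∈ cand, ∀ x ∈ cand, ¬ x < S := by
    obtain ⟨S, hS⟩ := Finset.exists_minimal (s := cand) ⟨_, hS₀c⟩
    exact ⟨S, hS.1, fun x hx hlt => hlt.not_ge (hS.2 hx hlt.le)⟩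
  rw [hcand, Finset.mem_filter, Finset.mem_powerset] at hScand
  obtain ⟨hSX, hSv⟩ := hScand
  -- Step 3: every element of N'(S) has two distinct S-neighbors.
  have hsecond : ∀ y : ℤ × ℤ, ∀ x₀ ∈ S, y ∈ tR N N' m n x₀ →
      ∃ x₁ ∈ S, x₁ ≠ x₀ ∧ y ∈ tR N N' m n x₁ := by
    intro y x₀ hx₀ hy
    have h1 : (S.erase x₀).card ≤ (NN (S.erase x₀)).card := by
      by_contra hlt
      push_neg at hlt
      refine hSmin (S.erase x₀) ?_ (Finset.erase_ssubset hx₀)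
      rw [hcand, Finset.mem_filter, Finset.mem_powerset]
      exact ⟨(Finset.erase_subset _ _).trans hSX, hlt⟩
    have hsub : NN (S.erase x₀) ⊆ NN S :=
      Finset.biUnion_subset_biUnion_of_subset_left _ (Finset.erase_subset _ _)
    have hcard : (S.erase x₀).card = S.card - 1 := Finset.card_erase_of_mem hx₀
    have hpos : 0 < S.card := Finset.card_pos.mpr ⟨x₀, hx₀⟩
    have hle := Finset.card_le_card hsub
    have hEq : NN (S.erase x₀) = NN S := by
      apply Finset.eq_of_subset_of_card_le hsub
      omega
    have hyN : y ∈ NN (S.erase x₀) := by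
      rw [hEq, hNN]
      exact Finset.mem_biUnion.mpr ⟨x₀, hx₀, hy⟩
    rw [hNN] at hyN
    obtain ⟨x₁, hx₁, hx₁y⟩ := Finset.mem_biUnion.mp hyN
    exact ⟨x₁, Finset.mem_of_mem_erase hx₁, Finset.ne_of_mem_erase hx₁, hx₁y⟩
  -- Step 4: the one-step vertical closure T = S ∪ D.
  set D : Finset (ℤ × ℤ) :=
    ((YF N N' m n).filter (fun y => ∃ x ∈ S, x.2 = y.2 ∧ y.1 < x.1)).image
      (fun y => (y.1 + 1, y.2)) with hD
  set T : Finset (ℤ × ℤ) := S ∪ D with hT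
  have hmemD : ∀ q : ℤ × ℤ, q ∈ D ↔
      ((q.1 - 1, q.2) ∈ YF N N' m n ∧ ∃ x ∈ S, x.2 = q.2 ∧ q.1 - 1 < x.1) := by
    intro q
    rw [hD, Finset.mem_image]
    constructor
    · rintro ⟨y, hy, rfl⟩
      rw [Finset.mem_filter] at hy
      obtain ⟨hyY, x, hxS, hx2, hx1⟩ := hy
      dsimp only
      constructor
      · rw [show (y.1 + 1 - 1, y.2) = y by rw [Prod.ext_iff]; constructor <;> simp]
        exact hyY
      · exact ⟨x, hxS, hx2, by omega⟩
    · rintro ⟨hqY, x, hxS, hx2, hx1⟩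
      refine ⟨(q.1 - 1, q.2), Finset.mem_filter.mpr ⟨hqY, ⟨x, hxS, hx2, hx1⟩⟩, ?_⟩
      rw [Prod.ext_iff]
      constructor <;> simp
  have hDX : ∀ q ∈ D, q ∈ XF N N' m n := by
    intro q hq
    obtain ⟨hqY, x, hxS, hx2, hx1⟩ := (hmemD q).mp hq
    have hxX : (x.1, q.2) ∈ XF N N' m n := by
      rw [← hx2, Prod.mk.eta]
      exact hSX hxS
    have := interval N N' m n hladder hqY hxX hx1
    rwa [show (q.1 - 1 + 1, q.2) = q by rw [Prod.ext_iff]; constructor <;> simp] at this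
  have hTX : T ⊆ XF N N' m n := by
    rw [hT]
    intro p hp
    rcases Finset.mem_union.mp hp with hp | hp
    · exact hSX hp
    · exact hDX p hp
  -- Step 5: descent.
  have hdesc : ∀ j k i₀ : ℤ, (k - 1, j) ∈ YF N N' m n → (i₀, j) ∈ S →
      ∀ d : ℕ, ∀ w : ℤ, w = i₀ - (d : ℤ) → k ≤ w →
      ∃ c, (w, c) ∈ S ∧ (n j).a ≤ (n c).a ∧ (n j).b ≤ (n c).b := by
    intro j k i₀ hkY hi₀S d
    induction d with
    | zero =>
      intro w hw hkw
      refine ⟨j, ?_, le_refl _, le_refl _⟩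
      have hwi : w = i₀ := by push_cast at hw; omega
      rw [hwi]; exact hi₀S
    | succ d ih =>
      intro w hw hkw
      have hw1 : w + 1 = i₀ - (d : ℤ) := by push_cast at hw ⊢; omega
      obtain ⟨c, hcS, hca, hcb⟩ := ih (w + 1) hw1 (by omega)
      have hcX := hSX hcS
      rw [mem_XF] at hcX
      obtain ⟨hw10, hw1N, hc0, hcN', hxa, hxb, hxc⟩ := hcX
      have hkY' := hkY
      rw [mem_YF] at hkY'
      obtain ⟨hk0, hkN, hj0, hjN', hka, hkb, hkc⟩ := hkY'
      have hwN : w < N := by omega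
      have hw0 : 0 ≤ w := by omega
      have hmw := mono N m hladder hk0 (by omega : k - 1 ≤ w) hwN
      have hstep := hladder w (w + 1) hw0 (by omega) hw1N
      have hyY : (w, c) ∈ YF N N' m n := by
        rw [mem_YF]
        exact ⟨hw0, hwN, hc0, hcN', by omega, by omega, by omega⟩
      have hedge : (w, c) ∈ tR N N' m n (w + 1, c) :=
        vert_edge N N' m n hladder hyY (hSX hcS)
      obtain ⟨x₁, hx₁S, hx₁ne, hx₁e⟩ := hsecond (w, c) (w + 1, c) hcS hedge
      rw [mem_tR] at hx₁e
      obtain ⟨-, hrel, hres⟩ := hx₁e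
      dsimp only at hrel hres
      rcases hrel with ⟨h1, h2⟩ | ⟨h1, h2⟩
      · rw [seg_prec_iff] at h2
        refine ⟨x₁.2, ?_, by omega, by omega⟩
        have hx₁eq : x₁ = (w, x₁.2) := Prod.ext h1 rfl
        rw [← hx₁eq]; exact hx₁S
      · exfalso
        rw [seg_prec_iff] at h2
        have hx₁X := hSX hx₁S
        rw [show x₁ = (x₁.1, x₁.2) from rfl, mem_XF] at hx₁X
        have hlt : w < x₁.1 := rev_a N m hladder hw0 hwN hx₁X.1 hx₁X.2.1 h2.1
        exact hx₁ne (Prod.ext (by omega) h1)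
  -- Step 6: horizontal neighbors of points of D are already neighbors of S.
  have hhoriz : ∀ q ∈ D, q ∉ S → ∀ y : ℤ × ℤ, y ∈ YF N N' m n → y.1 = q.1 →
      (n y.2).Prec (n q.2) → y ∈ NN S := by
    intro q hqD hqS y hyY hy1 hyprec
    obtain ⟨hq', x, hxS, hx2, hx1⟩ := (hmemD q).mp hqD
    have hxS' : (x.1, q.2) ∈ S := by rw [← hx2, Prod.mk.eta]; exact hxS
    have hki : q.1 ≤ x.1 := by omega
    have hdval : ((x.1 - q.1).toNat : ℤ) = x.1 - q.1 := Int.toNat_of_nonneg (by omega)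
    obtain ⟨c, hcS, hca, hcb⟩ := hdesc q.2 q.1 x.1 hq' hxS' (x.1 - q.1).toNat q.1
      (by omega) (le_refl _)
    have hcX := hSX hcS
    rw [mem_XF] at hcX
    obtain ⟨-, -, -, -, hcxa, hcxb, hcxc⟩ := hcX
    rw [seg_prec_iff] at hyprec
    have hyY' := hyY
    rw [show y = (y.1, y.2) from rfl, mem_YF] at hyY'
    obtain ⟨-, -, -, -, hyya, hyyb, hyyc⟩ := hyY'
    rw [hNN]
    refine Finset.mem_biUnion.mpr ⟨(q.1, c), hcS, ?_⟩
    rw [mem_tR]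
    refine ⟨hyY, Or.inl ⟨hy1.symm, ?_⟩, by dsimp only; omega⟩
    show (n y.2).Prec (n c)
    rw [seg_prec_iff]
    rw [hy1] at hyyb
    refine ⟨by omega, by omega, by omega⟩
  -- Step 7: the matching f injects T into NN T.
  have hTcard : T.card ≤ (NN T).card := by
    have hmaps : ∀ p ∈ T, ∀ hp : p ∈ Xs N N' m n, (f ⟨p, hp⟩ : ℤ × ℤ) ∈ NN T := by
      intro p hpT hp
      have hyY : (f ⟨p, hp⟩ : ℤ × ℤ) ∈ YF N N' m n :=
        (mem_YF_iff_Ys N N' m n _).mpr (f ⟨p, hp⟩).2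
      have hrel := hf ⟨p, hp⟩
      dsimp only at hrel
      set y : ℤ × ℤ := (f ⟨p, hp⟩ : ℤ × ℤ) with hy
      rcases hrel with ⟨h1, h2⟩ | ⟨h1, h2⟩
      · exact Finset.mem_biUnion.mpr
          ⟨p, hpT, (mem_tR N N' m n p y).mpr ⟨hyY, Or.inl ⟨h1, h2⟩, by omega⟩⟩
      · -- vertical edge
        rw [seg_prec_iff] at h2
        have hpX : p ∈ XF N N' m n := (mem_XF_iff_Xs N N' m n p).mpr hp
        have hpX' := hpX
        rw [show p = (p.1, p.2) from rfl, mem_XF] at hpX'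
        have hyY' := hyY
        rw [show y = (y.1, y.2) from rfl, mem_YF] at hyY'
        have hlt : y.1 < p.1 :=
          rev_a N m hladder hyY'.1 hyY'.2.1 hpX'.1 hpX'.2.1 h2.1
        have hx : ∃ x ∈ S, x.2 = y.2 ∧ y.1 < x.1 := by
          rw [hT] at hpT
          rcases Finset.mem_union.mp hpT with hpS | hpD
          · exact ⟨p, hpS, h1, hlt⟩
          · obtain ⟨hq', x, hxS, hx2, hx1⟩ := (hmemD p).mp hpD
            exact ⟨x, hxS, by rw [hx2, h1], by omega⟩
        obtain ⟨x, hxS, hx2, hx1⟩ := hx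
        have hqD : (y.1 + 1, y.2) ∈ D := by
          rw [hmemD]
          refine ⟨?_, x, hxS, by simpa using hx2, by simpa using hx1⟩
          rw [show ((y.1 : ℤ) + 1 - 1, y.2) = y by rw [Prod.ext_iff]; constructor <;> simp]
          exact hyY
        have hqX : (y.1 + 1, y.2) ∈ XF N N' m n := hDX _ hqD
        have hedge : (y.1, y.2) ∈ tR N N' m n (y.1 + 1, y.2) :=
          vert_edge N N' m n hladder (by rw [Prod.mk.eta]; exact hyY) hqX
        refine Finset.mem_biUnion.mpr ⟨(y.1 + 1, y.2), ?_, by rw [← Prod.mk.eta (p := y)]; exact hedge⟩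
        rw [hT]
        exact Finset.mem_union_right _ hqD
    apply Finset.card_le_card_of_injOn
      (fun p => if hp : p ∈ Xs N N' m n then (f ⟨p, hp⟩ : ℤ × ℤ) else p)
    · intro p hpT
      have hp : p ∈ Xs N N' m n := (mem_XF_iff_Xs N N' m n p).mp (hTX hpT)
      simp only [dif_pos hp]
      exact hmaps p hpT hp
    · intro p hpT p' hpT' hpp
      rw [Finset.mem_coe] at hpT hpT'
      have hp : p ∈ Xs N N' m n := (mem_XF_iff_Xs N N' m n p).mp (hTX hpT)
      have hp' : p' ∈ Xs N N' m n := (mem_XF_iff_Xs N N' m n p').mp (hTX hpT')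
      dsimp only at hpp
      rw [dif_pos hp, dif_pos hp'] at hpp
      have := finj (Subtype.ext hpp)
      exact congrArg Subtype.val this
  -- Step 8: counting NN T.
  have hdiff : ∀ y ∈ NN T \ NN S, (y.1 + 1, y.2) ∈ T \ S := by
    intro y hy
    obtain ⟨hyT, hyS⟩ := Finset.mem_sdiff.mp hy
    rw [hNN] at hyT
    obtain ⟨q, hqT, hyq⟩ := Finset.mem_biUnion.mp hyT
    have hqS : q ∉ S := by
      intro hmem
      exact hyS (by rw [hNN]; exact Finset.mem_biUnion.mpr ⟨q, hmem, hyq⟩)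
    have hqD : q ∈ D := by
      rw [hT] at hqT
      exact (Finset.mem_union.mp hqT).resolve_left hqS
    rw [mem_tR] at hyq
    obtain ⟨hyY, hrel, hres⟩ := hyq
    rcases hrel with ⟨h1, h2⟩ | ⟨h1, h2⟩
    · exact absurd (hhoriz q hqD hqS y hyY h1.symm h2) hyS
    · rw [seg_prec_iff] at h2
      have hqX := hTX hqT
      rw [show q = (q.1, q.2) from rfl, mem_XF] at hqX
      have hyY' := hyY
      rw [show y = (y.1, y.2) from rfl, mem_YF] at hyY'
      have hlt : y.1 < q.1 :=
        rev_a N m hladder hyY'.1 hyY'.2.1 hqX.1 hqX.2.1 h2.1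
      have hq : q = (y.1 + 1, y.2) := Prod.ext (by omega) h1
      rw [Finset.mem_sdiff, ← hq]
      exact ⟨hqT, hqS⟩
  have hcount : (NN T \ NN S).card ≤ (T \ S).card := by
    apply Finset.card_le_card_of_injOn (fun y => (y.1 + 1, y.2))
    · intro y hy
      exact hdiff y (Finset.mem_coe.mp hy)
    · intro y hy y' hy' hyy
      dsimp only at hyy
      rw [Prod.ext_iff] at hyy ⊢
      obtain ⟨ha, hb⟩ := hyy
      dsimp only at ha hb
      exact ⟨by omega, hb⟩
  have hNTle : (NN T).card ≤ (NN T \ NN S).card + (NN S).card :=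
    Finset.card_le_card_sdiff_add_card
  have hST : S ⊆ T := by rw [hT]; exact Finset.subset_union_left
  have hTsplit : (T \ S).card + S.card = T.card := Finset.card_sdiff_add_card_eq_card hST
  omega

end LadderMatchAux

/-- For a ladder `𝔪 = (Δ₀, …, Δ_{N-1})` (strictly decreasing left and right endpoints)
and an arbitrary multisegment `𝔫 = (Δ'₀, …, Δ'_{N'-1})`, with
`X = {(i,j) : Δ_i ≺ Δ'_j}`, `Y = {(i,j) : (Δ_i − 1) ≺ Δ'_j}` and relation
`(i₂,j₂) ↝ (i₁,j₁) ↔ (i₁ = i₂ ∧ Δ'_{j₂} ≺ Δ'_{j₁}) ∨ (j₁ = j₂ ∧ Δ_{i₁} ≺ Δ_{i₂})`,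
a `↝`-matching function from `X` to `Y` exists iff a matching function exists for the
restricted relation `↝'` which additionally requires `i₁ ≤ i₂ + 1`. -/
theorem ladder_matching_iff_restricted (N N' : ℤ) (m n : ℤ → Seg)
    (hm : ∀ i, 0 ≤ i → i < N → (m i).IsSeg)
    (hn : ∀ j, 0 ≤ j → j < N' → (n j).IsSeg)
    (hladder : ∀ i j, 0 ≤ i → i < j → j < N → (m j).a < (m i).a ∧ (m j).b < (m i).b) :
    ExistsMatching
        {p : ℤ × ℤ | 0 ≤ p.1 ∧ p.1 < N ∧ 0 ≤ p.2 ∧ p.2 < N' ∧ (m p.1).Prec (n p.2)}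
        {p : ℤ × ℤ | 0 ≤ p.1 ∧ p.1 < N ∧ 0 ≤ p.2 ∧ p.2 < N' ∧ (m p.1).shift.Prec (n p.2)}
        (fun q p => (p.1 = q.1 ∧ (n q.2).Prec (n p.2)) ∨ (p.2 = q.2 ∧ (m p.1).Prec (m q.1))) ↔
      ExistsMatching
        {p : ℤ × ℤ | 0 ≤ p.1 ∧ p.1 < N ∧ 0 ≤ p.2 ∧ p.2 < N' ∧ (m p.1).Prec (n p.2)}
        {p : ℤ × ℤ | 0 ≤ p.1 ∧ p.1 < N ∧ 0 ≤ p.2 ∧ p.2 < N' ∧ (m p.1).shift.Prec (n p.2)}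
        (fun q p => ((p.1 = q.1 ∧ (n q.2).Prec (n p.2)) ∨ (p.2 = q.2 ∧ (m p.1).Prec (m q.1)))
          ∧ p.1 ≤ q.1 + 1) := by
  constructor
  · intro h
    exact LadderMatchAux.hard N N' m n hladder h
  · rintro ⟨f, finj, hrel⟩
    exact ⟨f, finj, fun p => (hrel p).1⟩
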